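/- (Covering by good rectangles.) Let μ be a Radon measure on ℝ^N, K compact with μ(K) > 0, r_0 > 0, and fix L ≥ 8, σ ∈ (0,1/2), 0 ≤ N_0 < N. Then for any ε > 0 there are finitely many pairwise disjoint rectangles E(x_i, r_i) with 0 < r_i ≤ r_0, μ(S(x_i,r_i) ∩ K) ≥ σ^{N−N_0}·(1/3)·2^{−2N−N_0−1}·(1+1/6)^{−1}·μ(E(x_i,r_i) ∩ K) > 0 for each i, and μ(K \ ⋃_i E(x_i,r_i)) ≤ ε·μ(K). -/

import Mathlib

open MeasureTheory

/-- The rectangle `E(x,r)`, which is `L²` times larger in the first `N₀` coordinates. -/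
def Erect {N₀ N₁ : ℕ} (L : ℝ) (x : (Fin N₀ → ℝ) × (Fin N₁ → ℝ)) (r : ℝ) :
    Set ((Fin N₀ → ℝ) × (Fin N₁ → ℝ)) :=
  {y | (∀ i, |x.1 i - y.1 i| ≤ L ^ 2 * r / 2) ∧ (∀ i, |x.2 i - y.2 i| ≤ 2 * r)}

/-- The thin core `S(x,r)` of the rectangle `E(x,r)`. -/
def Score {N₀ N₁ : ℕ} (L σ : ℝ) (x : (Fin N₀ → ℝ) × (Fin N₁ → ℝ)) (r : ℝ) :
    Set ((Fin N₀ → ℝ) × (Fin N₁ → ℝ)) :=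
  {y | (∀ i, |x.1 i - y.1 i| ≤ L ^ 2 * r / 2 - L * r / 2) ∧ (∀ i, |x.2 i - y.2 i| ≤ 2 * σ * r)}

/-!
After an anisotropic rescaling the rectangles `E(x, r)` become sup-norm balls, their cores
`S(x, r)` become thin boxes inside them, and `μ` restricted to `K` becomes a finite measure `ρ`.

Cutting a cube into `3 ^ N₀ * ⌈2 / σ⌉ ^ N₁` cells, one cell carries a fixed fraction of its mass,
and that cell lies in the core of a cube of half the size centred in the original cube. Halving
repeatedly, either one of these cubes is good (its core carries a fixed fraction of its mass) or
the mass doubles at every step, which a finite measure forbids; so a good cube inside the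
doubled ball captures a fixed fraction of the mass of the starting ball.

For `ρ`-almost every `x`, arbitrarily small radii `t` satisfy the doubling bound
`ρ (closedBall x t) ≤ 4 ^ (N + 1) * ρ (closedBall x (t / 4))`: otherwise Lebesgue measure of small
balls around `x` divided by their `ρ`-measure would blow up, which Besicovitch differentiation
excludes almost everywhere. Around such points the Besicovitch covering theorem yields disjoint
balls, avoiding the good cubes chosen so far, whose good cubes capture a fixed fraction of the
uncovered mass. Repeating, the uncovered mass decays geometrically.
-/

open Metric Set Filter Topology ENNReal Module

namespace GoodRectangles

section Exhaustion

variable {X : Type*} [MetricSpace X]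

def packingUnion (F : Set (X × ℝ)) : Set X := ⋃ p ∈ F, closedBall p.1 p.2

def IsPacking (P : X → ℝ → Prop) (F : Set (X × ℝ)) : Prop :=
  F.Finite ∧ F.PairwiseDisjoint (fun p => closedBall p.1 p.2) ∧ ∀ p ∈ F, P p.1 p.2

variable {P : X → ℝ → Prop}

lemma _root_.Set.Finite.isClosed_packingUnion {F : Set (X × ℝ)} (hF : F.Finite) :
    IsClosed (packingUnion F) :=
  hF.isClosed_biUnion fun _ _ => isClosed_closedBall

lemma IsPacking.union {F G : Set (X × ℝ)} (hF : IsPacking P F) (hG : IsPacking P G)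
    (hGF : packingUnion G ⊆ (packingUnion F)ᶜ) : IsPacking P (F ∪ G) := by
  refine ⟨hF.1.union hG.1, pairwiseDisjoint_union.2 ⟨hF.2.1, hG.2.1, fun p hp q hq _ => ?_⟩,
    fun p hp => hp.elim (hF.2.2 p) (hG.2.2 p)⟩
  have hpF : closedBall p.1 p.2 ⊆ packingUnion F :=
    subset_biUnion_of_mem (u := fun p : X × ℝ => closedBall p.1 p.2) hp
  have hqG : closedBall q.1 q.2 ⊆ packingUnion G :=
    subset_biUnion_of_mem (u := fun p : X × ℝ => closedBall p.1 p.2) hq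
  exact (disjoint_compl_right_iff_subset.2 hpF).mono_right (hqG.trans hGF)

variable [MeasurableSpace X] [OpensMeasurableSpace X] {ρ : Measure X}

lemma measure_compl_packingUnion_union [IsFiniteMeasure ρ] {F G : Set (X × ℝ)}
    (hG : G.Finite) (hGF : packingUnion G ⊆ (packingUnion F)ᶜ) :
    ρ (packingUnion (F ∪ G))ᶜ = ρ (packingUnion F)ᶜ - ρ (packingUnion G) := by
  rw [← measure_sdiff hGF hG.isClosed_packingUnion.measurableSet.nullMeasurableSet
    (measure_ne_top _ _), packingUnion, biUnion_union, compl_union, sdiff_eq]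
  rfl

def CapturesSmallBalls (ρ : Measure X) (P : X → ℝ → Prop) (M : ℝ≥0∞) (x : X) : Prop :=
  ∀ δ > 0, ∃ t ∈ Ioo 0 δ, ∃ z s, P z s ∧ closedBall z s ⊆ closedBall x t ∧
    0 < ρ (closedBall z s) ∧ ρ (closedBall x t) ≤ M * ρ (closedBall z s)

variable [SecondCountableTopology X] [HasBesicovitchCovering X] {M : ℝ≥0∞}

lemma exists_pairwiseDisjoint_capture [SFinite ρ] (hP : ∀ᵐ x ∂ρ, CapturesSmallBalls ρ P M x)
    {U : Set X} (hU : IsOpen U) :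
    ∃ T : Set (X × ℝ), T.PairwiseDisjoint (fun p => closedBall p.1 p.2) ∧
      (∀ p ∈ T, P p.1 p.2 ∧ closedBall p.1 p.2 ⊆ U) ∧
      ρ U ≤ M * ∑' p : T, ρ (closedBall p.1.1 p.1.2) := by
  set G := {x | CapturesSmallBalls ρ P M x}
  set f : X → Set ℝ := fun x => {t | closedBall x t ⊆ U ∧ ∃ z s, P z s ∧
    closedBall z s ⊆ closedBall x t ∧ 0 < ρ (closedBall z s) ∧
      ρ (closedBall x t) ≤ M * ρ (closedBall z s)}
  have hf : ∀ x ∈ U ∩ G, ∀ δ > 0, (f x ∩ Ioo 0 δ).Nonempty := by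
    rintro x ⟨hxU, hx⟩ δ hδ
    obtain ⟨ε, hε, hεU⟩ := Metric.isOpen_iff.1 hU x hxU
    obtain ⟨t, ⟨ht, htδ⟩, hcap⟩ := hx (min δ ε) (lt_min hδ hε)
    exact ⟨t, ⟨(closedBall_subset_ball (htδ.trans_le (min_le_right _ _))).trans hεU, hcap⟩,
      ht, htδ.trans_le (min_le_left _ _)⟩
  obtain ⟨t, r, htc, -, hr, hnull, hdisj⟩ := Besicovitch.exists_disjoint_closedBall_covering_ae
    ρ f (U ∩ G) hf (fun _ => 1) (fun _ _ => one_pos)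
  choose! z s hPzs hsub hpos hcap using fun x hx => (hr x hx).1.2
  have hinj : InjOn (fun x => (z x, s x)) t := by
    intro x hx y hy hxy
    by_contra hne
    obtain ⟨v, hv⟩ := nonempty_of_measure_ne_zero (hpos x hx).ne'
    obtain ⟨hz, hs⟩ : z x = z y ∧ s x = s y := Prod.ext_iff.1 hxy
    refine disjoint_left.1 (hdisj hx hy hne) (hsub x hx hv) (hsub y hy ?_)
    rwa [← hz, ← hs]
  refine ⟨(fun x => (z x, s x)) '' t, ?_, ?_, ?_⟩
  · rintro _ ⟨x, hx, rfl⟩ _ ⟨y, hy, rfl⟩ hne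
    exact (hdisj hx hy fun h => hne (h ▸ rfl)).mono (hsub x hx) (hsub y hy)
  · rintro _ ⟨x, hx, rfl⟩
    exact ⟨hPzs x hx, (hsub x hx).trans (hr x hx).1.1⟩
  · rw [tsum_image (fun p : X × ℝ => ρ (closedBall p.1 p.2)) hinj, ← ENNReal.tsum_mul_left]
    calc ρ U ≤ ρ (U ∩ G) := measure_mono_ae <| by
          filter_upwards [hP] with x hx hxU using ⟨hxU, hx⟩
      _ ≤ ρ (⋃ x ∈ t, closedBall x (r x)) := measure_mono_ae (ae_le_set.2 hnull)
      _ ≤ ∑' x : t, ρ (closedBall x (r x)) := measure_biUnion_le ρ htc _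
      _ ≤ ∑' x : t, M * ρ (closedBall (z x) (s x)) :=
          ENNReal.tsum_le_tsum fun x => hcap x x.2

variable [IsFiniteMeasure ρ]

lemma IsPacking.exists_measure_compl_le (hM : M ≠ ⊤)
    (hP : ∀ᵐ x ∂ρ, CapturesSmallBalls ρ P M x) {F : Set (X × ℝ)} (hF : IsPacking P F) :
    ∃ F', IsPacking P F' ∧ ρ (packingUnion F')ᶜ ≤ (1 - (2 * M)⁻¹) * ρ (packingUnion F)ᶜ := by
  set U := (packingUnion F)ᶜ
  obtain ⟨T, hTdisj, hTU, hUT⟩ :=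
    exists_pairwiseDisjoint_capture hP hF.1.isClosed_packingUnion.isOpen_compl
  rcases eq_or_ne (ρ U) 0 with hU0 | hU0
  · exact ⟨F, hF, by simp [U, hU0]⟩
  have hM0 : M ≠ 0 := by
    rintro rfl
    exact hU0 (le_zero_iff.1 (hUT.trans_eq (zero_mul _)))
  -- The factor `2` leaves room to pass to a finite subfamily.
  have hlt : ρ U / (2 * M) < ∑' p : T, ρ (closedBall p.1.1 p.1.2) :=
    calc ρ U / (2 * M) = ρ U / M / 2 := by
          simp only [ENNReal.div_eq_inv_mul,
            ENNReal.mul_inv (.inl two_ne_zero) (.inl ofNat_ne_top)]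
          ring
      _ < ρ U / M := ENNReal.half_lt_self (ENNReal.div_ne_zero.2 ⟨hU0, hM⟩)
          (ENNReal.div_ne_top (measure_ne_top ρ U) hM0)
      _ ≤ _ := ENNReal.div_le_of_le_mul' hUT
  rw [ENNReal.tsum_eq_iSup_sum] at hlt
  obtain ⟨G, hG⟩ := lt_iSup_iff.1 hlt
  set G' : Set (X × ℝ) := Subtype.val '' (G : Set T)
  have hG'disj : (G : Set T).PairwiseDisjoint (fun p => closedBall p.1.1 p.1.2) :=
    fun p _ q _ hpq => hTdisj p.2 q.2 (Subtype.coe_ne_coe.2 hpq)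
  have hG' : IsPacking P G' := ⟨G.finite_toSet.image _,
    hTdisj.subset (Subtype.coe_image_subset _ _), by rintro _ ⟨p, -, rfl⟩; exact (hTU p p.2).1⟩
  have hG'U : packingUnion G' ⊆ U := iUnion₂_subset <| by rintro _ ⟨p, -, rfl⟩; exact (hTU p p.2).2
  have hsum : ∑ p ∈ G, ρ (closedBall p.1.1 p.1.2) = ρ (packingUnion G') := by
    rw [packingUnion, biUnion_image, Finset.set_biUnion_coe,
      measure_biUnion_finset hG'disj fun p _ => measurableSet_closedBall]
  refine ⟨F ∪ G', hF.union hG' hG'U, ?_⟩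
  rw [measure_compl_packingUnion_union hG'.1 hG'U, ENNReal.sub_mul fun _ _ => measure_ne_top ρ U,
    one_mul, ← ENNReal.div_eq_inv_mul]
  exact tsub_le_tsub_left (hG.le.trans_eq hsum) _

theorem exists_isPacking_measure_compl_le (hM : M ≠ ⊤)
    (hP : ∀ᵐ x ∂ρ, CapturesSmallBalls ρ P M x) {ε : ℝ≥0∞} (hε : 0 < ε) :
    ∃ F, IsPacking P F ∧ ρ (packingUnion F)ᶜ ≤ ε * ρ univ := by
  set q := 1 - (2 * M)⁻¹
  have hq : q < 1 := ENNReal.sub_lt_self one_ne_top one_ne_zero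
    (ENNReal.inv_ne_zero.2 (ENNReal.mul_ne_top ofNat_ne_top hM))
  have hiter : ∀ n : ℕ, ∃ F, IsPacking P F ∧ ρ (packingUnion F)ᶜ ≤ q ^ n * ρ univ := by
    intro n
    induction n with
    | zero => exact ⟨∅, ⟨finite_empty, pairwiseDisjoint_empty, by simp⟩, by simp [packingUnion]⟩
    | succ n ih =>
      obtain ⟨F, hF, hFn⟩ := ih
      obtain ⟨F', hF', hF'F⟩ := hF.exists_measure_compl_le hM hP
      exact ⟨F', hF', hF'F.trans (by rw [pow_succ', mul_assoc]; gcongr)⟩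
  obtain ⟨n, hn⟩ :=
    ((ENNReal.tendsto_pow_atTop_nhds_zero_of_lt_one hq).eventually_lt_const hε).exists
  obtain ⟨F, hF, hFn⟩ := hiter n
  exact ⟨F, hF, hFn.trans (by gcongr)⟩

end Exhaustion

section Doubling

variable {E : Type*} [NormedAddCommGroup E] [NormedSpace ℝ E] [FiniteDimensional ℝ E]
  [MeasurableSpace E] [BorelSpace E]

lemma tendsto_addHaar_div_measure_closedBall (μ : Measure E) [μ.IsAddHaarMeasure]
    (ρ : Measure E) [IsLocallyFiniteMeasure ρ] (x : E) {s : ℝ} (hs : 0 < s)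
    (hdecay : ∀ k : ℕ, 4 ^ (finrank ℝ E + 1) * ρ (closedBall x (s / 4 ^ (k + 1))) ≤
      ρ (closedBall x (s / 4 ^ k))) :
    Tendsto (fun k : ℕ => μ (closedBall x (s / 4 ^ k)) / ρ (closedBall x (s / 4 ^ k))) atTop
      (𝓝 ⊤) := by
  have hpow : ∀ k : ℕ, (4 ^ (finrank ℝ E + 1)) ^ k * ρ (closedBall x (s / 4 ^ k)) ≤
      ρ (closedBall x s) := by
    intro k
    induction k with
    | zero => simp
    | succ k ih =>
      rw [pow_succ, mul_assoc]
      exact (mul_le_mul_right (hdecay k) _).trans ih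
  have hhaar : ∀ k : ℕ,
      μ (closedBall x s) = 4 ^ (finrank ℝ E * k) * μ (closedBall x (s / 4 ^ k)) := by
    intro k
    have h : s ^ finrank ℝ E = 4 ^ (finrank ℝ E * k) * (s / 4 ^ k) ^ finrank ℝ E := by
      rw [div_pow, ← pow_mul, mul_comm k, mul_div_cancel₀ _ (by positivity)]
    rw [Measure.addHaar_closedBall' μ x hs.le, Measure.addHaar_closedBall' μ x (by positivity),
      ← mul_assoc, h, ENNReal.ofReal_mul (by positivity), ENNReal.ofReal_pow (by norm_num),
      ENNReal.ofReal_ofNat]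
  have hgrow : ∀ k : ℕ, 4 ^ k * (μ (closedBall x s) / ρ (closedBall x s)) ≤
      μ (closedBall x (s / 4 ^ k)) / ρ (closedBall x (s / 4 ^ k)) := by
    intro k
    rw [← mul_div_assoc, hhaar k, ← mul_assoc,
      show (4 : ℝ≥0∞) ^ k * 4 ^ (finrank ℝ E * k) = (4 ^ (finrank ℝ E + 1)) ^ k by ring]
    calc (4 ^ (finrank ℝ E + 1)) ^ k * μ (closedBall x (s / 4 ^ k)) / ρ (closedBall x s)
        ≤ (4 ^ (finrank ℝ E + 1)) ^ k * μ (closedBall x (s / 4 ^ k)) /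
            ((4 ^ (finrank ℝ E + 1)) ^ k * ρ (closedBall x (s / 4 ^ k))) :=
          ENNReal.div_le_div_left (hpow k) _
      _ = _ := ENNReal.mul_div_mul_left _ _ (by simp) (by simp)
  have hc : μ (closedBall x s) / ρ (closedBall x s) ≠ 0 :=
    ENNReal.div_ne_zero.2 ⟨(measure_closedBall_pos μ x hs).ne', measure_closedBall_lt_top.ne⟩
  refine tendsto_nhds_top_mono ?_ (Eventually.of_forall hgrow)
  simpa [ENNReal.top_mul hc] using ENNReal.Tendsto.mul_const
    (b := μ (closedBall x s) / ρ (closedBall x s))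
    (ENNReal.tendsto_pow_atTop_nhds_top_iff.2 (by norm_num : (1 : ℝ≥0∞) < 4)) (.inl top_ne_zero)

theorem ae_exists_doubling_radius (ρ : Measure E) [IsLocallyFiniteMeasure ρ] :
    ∀ᵐ x ∂ρ, ∀ δ > 0, ∃ t ∈ Ioo 0 δ,
      ρ (closedBall x t) ≤ 4 ^ (finrank ℝ E + 1) * ρ (closedBall x (t / 4)) := by
  filter_upwards [Besicovitch.ae_tendsto_rnDeriv Measure.addHaar ρ,
    Measure.addHaar.rnDeriv_lt_top ρ] with x hlim hfin δ hδ
  by_contra! hbad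
  have hr : ∀ k : ℕ, δ / 2 / 4 ^ k ∈ Ioo 0 δ := fun k =>
    ⟨by positivity, (div_le_self (by positivity) (one_le_pow₀ (by norm_num))).trans_lt
      (half_lt_self hδ)⟩
  have htop := tendsto_addHaar_div_measure_closedBall Measure.addHaar ρ x (half_pos hδ) fun k => by
    simpa only [pow_succ, ← div_div] using (hbad _ (hr k)).le
  have hr0 : Tendsto (fun k : ℕ => δ / 2 / 4 ^ k) atTop (𝓝[>] 0) := by
    refine tendsto_nhdsWithin_iff.2 ⟨?_, Eventually.of_forall fun k => (hr k).1⟩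
    simpa using tendsto_const_nhds.div_atTop
      (tendsto_pow_atTop_atTop_of_one_lt (by norm_num : (1 : ℝ) < 4))
  exact hfin.ne (tendsto_nhds_unique (hlim.comp hr0) htop)

end Doubling

lemma exists_measure_le_card_mul {α X : Type*} [Fintype α] [Nonempty α] [MeasurableSpace X]
    (ρ : Measure X) {s : Set X} {t : α → Set X} (h : s ⊆ ⋃ a, t a) :
    ∃ a, ρ s ≤ Fintype.card α * ρ (t a) := by
  obtain ⟨a, ha⟩ := Finite.exists_max fun a => ρ (t a)
  refine ⟨a, (measure_mono h).trans ((measure_iUnion_fintype_le ρ t).trans ?_)⟩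
  simpa [nsmul_eq_mul] using Finset.sum_le_card_nsmul Finset.univ _ _ fun b _ => ha b

lemma exists_fin_mul_le_le {n : ℕ} (hn : 0 < n) {w a : ℝ} (hw : 0 < w) (ha : 0 ≤ a)
    (han : a ≤ n * w) : ∃ j : Fin n, j * w ≤ a ∧ a ≤ (j + 1) * w := by
  rcases han.lt_or_eq with h | h
  · have hfl : ⌊a / w⌋₊ < n := (Nat.floor_lt (div_nonneg ha hw.le)).2 ((div_lt_iff₀ hw).2 h)
    exact ⟨⟨_, hfl⟩, (le_div_iff₀ hw).1 (Nat.floor_le (div_nonneg ha hw.le)),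
      (div_le_iff₀ hw).1 (Nat.lt_floor_add_one _).le⟩
  · refine ⟨⟨n - 1, by omega⟩, ?_, ?_⟩ <;>
    · simp only [Nat.cast_sub (Nat.one_le_of_lt hn), Nat.cast_one, h]
      nlinarith

section Grid

variable {ι : Type*} [Fintype ι]

noncomputable def gridPoint (c : ι → ℝ) (s : ℝ) (n : ℕ) (p : ι → Fin n) : ι → ℝ :=
  fun i => c i - s + (p i + 1 / 2) * (2 * s / n)

lemma gridPoint_mem_closedBall {c : ι → ℝ} {s : ℝ} (hs : 0 ≤ s) {n : ℕ} (p : ι → Fin n) :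
    gridPoint c s n p ∈ closedBall c s := by
  rw [mem_closedBall, dist_pi_le_iff hs]
  intro i
  have hn : (0 : ℝ) < n := by exact_mod_cast Fin.pos (p i)
  have hp : (p i : ℝ) + 1 / 2 ≤ n := by
    have : (p i : ℝ) + 1 ≤ n := by exact_mod_cast (p i).2
    linarith
  have h2s : ((p i : ℝ) + 1 / 2) * (2 * s / n) ≤ 2 * s :=
    calc ((p i : ℝ) + 1 / 2) * (2 * s / n) ≤ n * (2 * s / n) := by gcongr
      _ = 2 * s := by field_simp
  rw [Real.dist_eq, gridPoint, abs_le]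
  constructor <;> nlinarith [show 0 ≤ ((p i : ℝ) + 1 / 2) * (2 * s / n) by positivity]

lemma closedBall_subset_iUnion_gridPoint (c : ι → ℝ) {s : ℝ} (hs : 0 < s) {n : ℕ}
    (hn : 0 < n) : closedBall c s ⊆ ⋃ p, closedBall (gridPoint c s n p) (s / n) := by
  intro u hu
  rw [mem_closedBall, dist_pi_le_iff hs.le] at hu
  have hn' : (0 : ℝ) < n := by exact_mod_cast hn
  have hcell : ∀ i, ∃ j : Fin n, j * (2 * s / n) ≤ u i - (c i - s) ∧
      u i - (c i - s) ≤ (j + 1) * (2 * s / n) := fun i => by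
    have hi := abs_le.1 ((Real.dist_eq _ _).symm.trans_le (hu i))
    exact exists_fin_mul_le_le hn (by positivity) (by linarith)
      (by rw [mul_div_cancel₀ _ hn'.ne']; linarith)
  choose p hp using hcell
  refine mem_iUnion.2 ⟨p, ?_⟩
  rw [mem_closedBall, dist_pi_le_iff (by positivity)]
  intro i
  have hw : s / n = 2 * s / n / 2 := by ring
  rw [Real.dist_eq, gridPoint, abs_le, hw]
  constructor <;> linarith [hp i]

end Grid

section Boxes

variable {ι κ : Type*} [Fintype ι] [Fintype κ]

/-- Under the rescaling `(y₁, y₂) ↦ (2 y₁ / L², y₂ / 2)`, `Erect L x r` becomes the sup-norm ball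
`closedBall z r` and `Score L σ x r` becomes `core L σ z r`. -/
def core (L σ : ℝ) (z : (ι → ℝ) × (κ → ℝ)) (s : ℝ) : Set ((ι → ℝ) × (κ → ℝ)) :=
  closedBall z.1 (s - s / L) ×ˢ closedBall z.2 (σ * s)

lemma core_subset_closedBall {L σ s : ℝ} (hL : 0 < L) (hσ : σ ≤ 1) (hs : 0 ≤ s)
    (z : (ι → ℝ) × (κ → ℝ)) : core L σ z s ⊆ closedBall z s := by
  rw [← closedBall_prod_same]
  exact prod_mono (closedBall_subset_closedBall (by linarith [div_nonneg hs hL.le]))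
    (closedBall_subset_closedBall (by nlinarith))

variable (ι κ) in
noncomputable def slotCount (σ : ℝ) : ℕ := 3 ^ Fintype.card ι * ⌈2 / σ⌉₊ ^ Fintype.card κ

lemma exists_le_slotCount_mul_core {L σ : ℝ} (hL : 3 ≤ L) (hσ : 0 < σ)
    (ρ : Measure ((ι → ℝ) × (κ → ℝ))) (z : (ι → ℝ) × (κ → ℝ)) {s : ℝ} (hs : 0 < s) :
    ∃ z' ∈ closedBall z s, ρ (closedBall z s) ≤ slotCount ι κ σ * ρ (core L σ z' (s / 2)) := by
  classical
  set n := ⌈2 / σ⌉₊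
  have hn : 0 < n := Nat.ceil_pos.2 (by positivity)
  have : Nonempty (Fin n) := ⟨⟨0, hn⟩⟩
  set g : (ι → Fin 3) × (κ → Fin n) → (ι → ℝ) × (κ → ℝ) :=
    fun p => (gridPoint z.1 s 3 p.1, gridPoint z.2 s n p.2)
  have hcover : closedBall z s ⊆ ⋃ p, closedBall (g p).1 (s / 3) ×ˢ closedBall (g p).2 (s / n) := by
    rw [← closedBall_prod_same]
    rintro v ⟨hv₁, hv₂⟩
    obtain ⟨p₁, hp₁⟩ := mem_iUnion.1 (closedBall_subset_iUnion_gridPoint z.1 hs three_pos hv₁)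
    obtain ⟨p₂, hp₂⟩ := mem_iUnion.1 (closedBall_subset_iUnion_gridPoint z.2 hs hn hv₂)
    exact mem_iUnion.2 ⟨(p₁, p₂), by exact_mod_cast hp₁, hp₂⟩
  obtain ⟨p, hp⟩ := exists_measure_le_card_mul ρ hcover
  have hcard : Fintype.card ((ι → Fin 3) × (κ → Fin n)) = slotCount ι κ σ := by
    simp [slotCount, n]
  refine ⟨g p, ?_, hp.trans ?_⟩
  · rw [← closedBall_prod_same]
    exact ⟨gridPoint_mem_closedBall hs.le _, gridPoint_mem_closedBall hs.le _⟩
  rw [hcard]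
  gcongr
  refine prod_mono (closedBall_subset_closedBall ?_) (closedBall_subset_closedBall ?_)
  · have : s / 2 / L ≤ s / 6 := by
      rw [div_div]
      exact div_le_div_of_nonneg_left hs.le (by norm_num) (by linarith)
    linarith
  · calc s / n ≤ s / (2 / σ) := div_le_div_of_nonneg_left hs.le (by positivity) (Nat.le_ceil _)
      _ = σ * (s / 2) := by field_simp

def IsGoodBox (c : ℝ≥0∞) (L σ : ℝ) (ρ : Measure ((ι → ℝ) × (κ → ℝ))) (z : (ι → ℝ) × (κ → ℝ))
    (s : ℝ) : Prop :=
  c * ρ (closedBall z s) ≤ ρ (core L σ z s) ∧ 0 < ρ (core L σ z s)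

lemma exists_isGoodBox_or_two_mul_le {c : ℝ≥0∞} {L σ : ℝ} (hc : slotCount ι κ σ * c ≤ 2⁻¹)
    (hL : 3 ≤ L) (hσ₀ : 0 < σ) (hσ₁ : σ ≤ 1) (ρ : Measure ((ι → ℝ) × (κ → ℝ)))
    (z : (ι → ℝ) × (κ → ℝ)) {s : ℝ} (hs : 0 < s) (hpos : 0 < ρ (closedBall z s)) :
    ∃ z' ∈ closedBall z s, ρ (closedBall z s) ≤ slotCount ι κ σ * ρ (closedBall z' (s / 2)) ∧
      (IsGoodBox c L σ ρ z' (s / 2) ∨ 2 * ρ (closedBall z s) ≤ ρ (closedBall z' (s / 2))) := by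
  obtain ⟨z', hz', hcore⟩ := exists_le_slotCount_mul_core hL hσ₀ ρ z hs
  have hcb := core_subset_closedBall (L := L) (by linarith) hσ₁ (by positivity : 0 ≤ s / 2) z'
  refine ⟨z', hz', hcore.trans (by gcongr), ?_⟩
  by_cases hgood : c * ρ (closedBall z' (s / 2)) ≤ ρ (core L σ z' (s / 2))
  · refine .inl ⟨hgood, pos_iff_ne_zero.2 fun h0 => ?_⟩
    rw [h0, mul_zero] at hcore
    exact hpos.ne' (le_zero_iff.1 hcore)
  · right
    calc 2 * ρ (closedBall z s) ≤ 2 * (slotCount ι κ σ * (c * ρ (closedBall z' (s / 2)))) := by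
          gcongr 2 * ?_
          exact hcore.trans (mul_le_mul_right (not_le.1 hgood).le _)
      _ ≤ 2 * (2⁻¹ * ρ (closedBall z' (s / 2))) := by
          rw [← mul_assoc (slotCount ι κ σ : ℝ≥0∞)]
          exact mul_le_mul_right (mul_le_mul_left hc _) _
      _ = ρ (closedBall z' (s / 2)) := ENNReal.mul_inv_cancel_left two_ne_zero ofNat_ne_top

lemma exists_isGoodBox_subset {c : ℝ≥0∞} {L σ : ℝ} (hc : slotCount ι κ σ * c ≤ 2⁻¹)
    (hL : 3 ≤ L) (hσ₀ : 0 < σ) (hσ₁ : σ ≤ 1) (ρ : Measure ((ι → ℝ) × (κ → ℝ)))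
    [IsFiniteMeasure ρ] (x : (ι → ℝ) × (κ → ℝ)) {t : ℝ} (ht : 0 < t)
    (hpos : 0 < ρ (closedBall x t)) :
    ∃ z s, 0 < s ∧ s ≤ t ∧ closedBall z s ⊆ closedBall x (2 * t) ∧ IsGoodBox c L σ ρ z s ∧
      ρ (closedBall x t) ≤ slotCount ι κ σ * ρ (closedBall z s) := by
  by_contra hnone
  -- Otherwise the halving steps never stop, and the measure doubles at each of them.
  have hgrow : ∀ j : ℕ, ∃ z, closedBall z (2 * (t / 2 ^ j)) ⊆ closedBall x (2 * t) ∧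
      2 ^ j * ρ (closedBall x t) ≤ ρ (closedBall z (t / 2 ^ j)) := by
    intro j
    induction j with
    | zero => exact ⟨x, by simp, by simp⟩
    | succ j ih =>
      obtain ⟨z, hzx, hz⟩ := ih
      set s := t / 2 ^ j
      have hs : 0 < s := by positivity
      have hst : s ≤ t := div_le_self ht.le (one_le_pow₀ one_le_two)
      have hxz : ρ (closedBall x t) ≤ ρ (closedBall z s) :=
        (le_mul_of_one_le_left' (one_le_pow₀ one_le_two)).trans hz
      obtain ⟨z', hz', hcap, hnext⟩ :=
        exists_isGoodBox_or_two_mul_le hc hL hσ₀ hσ₁ ρ z hs (hpos.trans_le hxz)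
      have hsub : closedBall z' s ⊆ closedBall x (2 * t) :=
        (closedBall_subset_closedBall' (by rw [mem_closedBall] at hz'; linarith)).trans hzx
      rcases hnext with hgood | hdbl
      · exact absurd ⟨z', s / 2, by positivity, by linarith,
          (closedBall_subset_closedBall (by linarith)).trans hsub, hgood, hxz.trans hcap⟩ hnone
      · rw [show t / 2 ^ (j + 1) = s / 2 by rw [pow_succ, div_div], mul_div_cancel₀ _ two_ne_zero,
          pow_succ, mul_comm _ (2 : ℝ≥0∞), mul_assoc]
        exact ⟨z', hsub, (mul_le_mul_right hz 2).trans hdbl⟩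
  obtain ⟨n, hn⟩ := ENNReal.exists_nat_mul_gt hpos.ne' (measure_ne_top ρ univ)
  obtain ⟨z, -, hz⟩ := hgrow n
  have h2n : (n : ℝ≥0∞) ≤ 2 ^ n := by exact_mod_cast Nat.lt_two_pow_self.le
  exact (hn.trans_le ((mul_le_mul_left h2n _).trans hz)).not_ge (measure_mono (subset_univ _))

lemma ae_capturesSmallBalls_isGoodBox {c : ℝ≥0∞} {L σ : ℝ} (hc : slotCount ι κ σ * c ≤ 2⁻¹)
    (hL : 3 ≤ L) (hσ₀ : 0 < σ) (hσ₁ : σ ≤ 1) (ρ : Measure ((ι → ℝ) × (κ → ℝ)))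
    [IsFiniteMeasure ρ] {r₀ : ℝ} (hr₀ : 0 < r₀) :
    ∀ᵐ x ∂ρ, CapturesSmallBalls ρ (fun z s => 0 < s ∧ s ≤ r₀ ∧ IsGoodBox c L σ ρ z s)
      (4 ^ (finrank ℝ ((ι → ℝ) × (κ → ℝ)) + 1) * slotCount ι κ σ) x := by
  filter_upwards [ae_exists_doubling_radius ρ, ρ.support_mem_ae] with x hdbl hsupp δ hδ
  obtain ⟨t, ⟨ht, htδ⟩, hdt⟩ := hdbl (min δ r₀) (lt_min hδ hr₀)
  have hpos : 0 < ρ (closedBall x (t / 4)) :=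
    (Measure.mem_support_iff_forall x).1 hsupp _ (closedBall_mem_nhds x (by positivity))
  obtain ⟨z, s, hs, hst, hsub, hgood, hcap⟩ :=
    exists_isGoodBox_subset hc hL hσ₀ hσ₁ ρ x (by positivity) hpos
  refine ⟨t, ⟨ht, htδ.trans_le (min_le_left _ _)⟩, z, s,
    ⟨hs, by linarith [min_le_right δ r₀], hgood⟩,
    hsub.trans (closedBall_subset_closedBall (by linarith)), ?_, ?_⟩
  · refine pos_iff_ne_zero.2 fun h0 => ?_
    rw [h0, mul_zero] at hcap
    exact hpos.ne' (le_zero_iff.1 hcap)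
  · exact hdt.trans (by rw [mul_assoc]; gcongr)

theorem exists_isPacking_isGoodBox {c : ℝ≥0∞} {L σ : ℝ} (hc : slotCount ι κ σ * c ≤ 2⁻¹)
    (hL : 3 ≤ L) (hσ₀ : 0 < σ) (hσ₁ : σ ≤ 1) (ρ : Measure ((ι → ℝ) × (κ → ℝ)))
    [IsFiniteMeasure ρ] {r₀ : ℝ} (hr₀ : 0 < r₀) {ε : ℝ≥0∞} (hε : 0 < ε) :
    ∃ F, IsPacking (fun z s => 0 < s ∧ s ≤ r₀ ∧ IsGoodBox c L σ ρ z s) F ∧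
      ρ (packingUnion F)ᶜ ≤ ε * ρ univ :=
  exists_isPacking_measure_compl_le
    (ENNReal.mul_ne_top (ENNReal.pow_ne_top ofNat_ne_top) (ENNReal.natCast_ne_top _))
    (ae_capturesSmallBalls_isGoodBox hc hL hσ₀ hσ₁ ρ hr₀) hε

end Boxes

lemma slotCount_mul_ofReal_le {N₀ N₁ : ℕ} {σ : ℝ} (hσ₀ : 0 < σ) (hσ₁ : σ ≤ 1) :
    (slotCount (Fin N₀) (Fin N₁) σ : ℝ≥0∞) * ENNReal.ofReal
      (σ ^ N₁ * (1 / 3) * ((2 : ℝ) ^ (2 * (N₀ + N₁) + N₀ + 1))⁻¹ * (1 + 1 / 6)⁻¹) ≤ 2⁻¹ := by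
  set m := ⌈2 / σ⌉₊
  have hm : (m : ℝ) * σ ≤ 3 := by
    have h1 : (m : ℝ) < 2 / σ + 1 := Nat.ceil_lt_add_one (by positivity)
    have h2 : (2 / σ + 1) * σ ≤ 3 := by rw [add_mul, div_mul_cancel₀ _ hσ₀.ne']; linarith
    nlinarith
  have hbound : (3 : ℝ) ^ N₀ * ((m : ℝ) * σ) ^ N₁ ≤ 8 ^ N₀ * 4 ^ N₁ := by
    gcongr
    · norm_num
    · linarith
  have h2pow : (2 : ℝ) ^ (2 * (N₀ + N₁) + N₀ + 1) = 8 ^ N₀ * 4 ^ N₁ * 2 := by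
    rw [show 2 * (N₀ + N₁) + N₀ + 1 = 3 * N₀ + 2 * N₁ + 1 by ring, pow_succ, pow_add, pow_mul,
      pow_mul]
    norm_num
  rw [slotCount, Fintype.card_fin, Fintype.card_fin, ← ENNReal.ofReal_natCast,
    ← ENNReal.ofReal_mul (by positivity), ← ENNReal.ofReal_ofNat 2,
    ← ENNReal.ofReal_inv_of_pos two_pos]
  refine ENNReal.ofReal_le_ofReal ?_
  rw [h2pow]
  push_cast
  have h84 : (0 : ℝ) < 8 ^ N₀ * 4 ^ N₁ := by positivity
  calc (3 : ℝ) ^ N₀ * m ^ N₁ * (σ ^ N₁ * (1 / 3) * (8 ^ N₀ * 4 ^ N₁ * 2)⁻¹ * (1 + 1 / 6)⁻¹)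
      = 3 ^ N₀ * (m * σ) ^ N₁ / (8 ^ N₀ * 4 ^ N₁) / 7 := by field_simp; ring
    _ ≤ 1 / 7 := by gcongr; exact (div_le_one h84).2 hbound
    _ ≤ 2⁻¹ := by norm_num

section Rescaling

variable {ι κ : Type*} [Fintype ι]

lemma abs_inv_mul_sub_le_iff {a y z α : ℝ} (ha : 0 < a) :
    |a⁻¹ * y - z| ≤ α ↔ |a * z - y| ≤ a * α := by
  rw [show a⁻¹ * y - z = -(a⁻¹ * (a * z - y)) by field_simp; ring, abs_neg, abs_mul,
    abs_inv, abs_of_pos ha, inv_mul_le_iff₀ ha]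

variable [Fintype κ]

lemma preimage_rescale_prod_closedBall {a b α β : ℝ} (ha : 0 < a) (hb : 0 < b) (hα : 0 ≤ α)
    (hβ : 0 ≤ β) (z : (ι → ℝ) × (κ → ℝ)) :
    (fun y : (ι → ℝ) × (κ → ℝ) => (a⁻¹ • y.1, b⁻¹ • y.2)) ⁻¹'
        (closedBall z.1 α ×ˢ closedBall z.2 β) =
      {y | (∀ i, |(a • z.1) i - y.1 i| ≤ a * α) ∧ ∀ i, |(b • z.2) i - y.2 i| ≤ b * β} := by
  ext y
  simp only [mem_preimage, mem_prod, mem_closedBall, dist_pi_le_iff hα, dist_pi_le_iff hβ,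
    Real.dist_eq, mem_ofPred_eq, Pi.smul_apply, smul_eq_mul, abs_inv_mul_sub_le_iff ha,
    abs_inv_mul_sub_le_iff hb]

variable {N₀ N₁ : ℕ}

lemma erect_eq_preimage {L r : ℝ} (hL : 0 < L) (hr : 0 ≤ r) (z : (Fin N₀ → ℝ) × (Fin N₁ → ℝ)) :
    Erect L ((L ^ 2 / 2) • z.1, (2 : ℝ) • z.2) r =
      (fun y : (Fin N₀ → ℝ) × (Fin N₁ → ℝ) => ((L ^ 2 / 2)⁻¹ • y.1, (2 : ℝ)⁻¹ • y.2)) ⁻¹'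
        closedBall z r := by
  rw [← closedBall_prod_same, preimage_rescale_prod_closedBall (by positivity) two_pos hr hr]
  simp only [Erect, show L ^ 2 * r / 2 = L ^ 2 / 2 * r by ring]

lemma score_eq_preimage {L σ r : ℝ} (hL : 1 ≤ L) (hσ : 0 ≤ σ) (hr : 0 ≤ r)
    (z : (Fin N₀ → ℝ) × (Fin N₁ → ℝ)) :
    Score L σ ((L ^ 2 / 2) • z.1, (2 : ℝ) • z.2) r =
      (fun y : (Fin N₀ → ℝ) × (Fin N₁ → ℝ) => ((L ^ 2 / 2)⁻¹ • y.1, (2 : ℝ)⁻¹ • y.2)) ⁻¹'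
        core L σ z r := by
  have hL0 : L ≠ 0 := by positivity
  rw [core, preimage_rescale_prod_closedBall (by positivity) two_pos
    (sub_nonneg.2 (div_le_self hr hL)) (by positivity)]
  simp only [Score, show L ^ 2 * r / 2 - L * r / 2 = L ^ 2 / 2 * (r - r / L) by field_simp,
    show 2 * σ * r = 2 * (σ * r) by ring]

end Rescaling

end GoodRectangles

open GoodRectangles

theorem stmt_6 (N₀ N₁ : ℕ)
    (μ : Measure ((Fin N₀ → ℝ) × (Fin N₁ → ℝ))) [IsLocallyFiniteMeasure μ]
    (K : Set ((Fin N₀ → ℝ) × (Fin N₁ → ℝ))) (hK : IsCompact K)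
    (r₀ L σ : ℝ) (hr₀ : 0 < r₀) (hL : 8 ≤ L) (hσ : σ ∈ Set.Ioo (0 : ℝ) (1 / 2))
    (ε : ℝ) (hε : 0 < ε) :
    ∃ (M : ℕ) (x : Fin M → (Fin N₀ → ℝ) × (Fin N₁ → ℝ)) (r : Fin M → ℝ),
      (∀ i, 0 < r i ∧ r i ≤ r₀) ∧
      (Pairwise fun i j => Disjoint (Erect L (x i) (r i)) (Erect L (x j) (r j))) ∧
      (∀ i,
        ENNReal.ofReal
            (σ ^ N₁ * (1 / 3) * ((2 : ℝ) ^ (2 * (N₀ + N₁) + N₀ + 1))⁻¹ * (1 + 1 / 6)⁻¹)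
          * μ (Erect L (x i) (r i) ∩ K) ≤ μ (Score L σ (x i) (r i) ∩ K) ∧
        0 < μ (Score L σ (x i) (r i) ∩ K)) ∧
      μ (K \ ⋃ i, Erect L (x i) (r i)) ≤ ENNReal.ofReal ε * μ K := by
  obtain ⟨hσ₀, hσ₁⟩ := hσ
  set T : (Fin N₀ → ℝ) × (Fin N₁ → ℝ) → (Fin N₀ → ℝ) × (Fin N₁ → ℝ) :=
    fun y => ((L ^ 2 / 2)⁻¹ • y.1, (2 : ℝ)⁻¹ • y.2)
  have hT : Measurable T := by fun_prop
  have : IsFiniteMeasure (μ.restrict K) := isFiniteMeasure_restrict.2 hK.measure_lt_top.ne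
  have hρ : ∀ s, MeasurableSet s → (μ.restrict K).map T s = μ (T ⁻¹' s ∩ K) := fun s hs => by
    rw [Measure.map_apply hT hs, Measure.restrict_apply (hT hs)]
  obtain ⟨F, hF, hrem⟩ := exists_isPacking_isGoodBox (L := L) (slotCount_mul_ofReal_le hσ₀
    (by linarith)) (by linarith) hσ₀ (by linarith) ((μ.restrict K).map T) hr₀
    (ENNReal.ofReal_pos.2 hε)
  obtain ⟨M, f, rfl⟩ := hF.1.fin_embedding
  have hE : ∀ i, Erect L ((L ^ 2 / 2) • (f i).1.1, (2 : ℝ) • (f i).1.2) (f i).2 =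
      T ⁻¹' closedBall (f i).1 (f i).2 := fun i =>
    erect_eq_preimage (by linarith) (hF.2.2 _ (mem_range_self i)).1.le _
  refine ⟨M, fun i => ((L ^ 2 / 2) • (f i).1.1, (2 : ℝ) • (f i).1.2), fun i => (f i).2,
    fun i => (hF.2.2 _ (mem_range_self i)).imp_right And.left, fun i j hij => ?_, fun i => ?_, ?_⟩
  · simp only [hE]
    exact (hF.2.1 (mem_range_self i) (mem_range_self j) (f.injective.ne hij)).preimage T
  · obtain ⟨hs, -, hgood⟩ := hF.2.2 _ (mem_range_self i)
    rwa [hE, score_eq_preimage (by linarith) hσ₀.le hs.le, ← hρ _ measurableSet_closedBall,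
      ← hρ (core L σ _ _) (isClosed_closedBall.prod isClosed_closedBall).measurableSet]
  · simp only [hE, ← preimage_iUnion]
    rw [← biUnion_range (f := f) (g := fun p => closedBall p.1 p.2), ← packingUnion, sdiff_eq,
      inter_comm, ← preimage_compl, ← hρ _ hF.1.isClosed_packingUnion.measurableSet.compl]
    refine hrem.trans_eq ?_
    rw [hρ _ MeasurableSet.univ, preimage_univ, univ_inter]
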